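/- arXiv:1710.04962 — 5 statements merged into one kernel-verified Lean document; each statement's English description precedes it below -/
import Mathlib

section
/- Let a, b be real numbers with a ≥ 1 and b ≥ 1, and let m be a positive integer satisfying m ≤ a · b^{ν(m)}, where ν(m) is the number of distinct prime divisors of m. Then m ≤ 16 · a² · exp(b⁶). -/
/-!
Distinct positive integers have product at least the factorial of their number, so with
`k = ν(m)` we get `k! ≤ m`. Squaring the hypothesis and using `x ^ k ≤ k! · exp x` for `x = b²`,
`m² ≤ a² (b²)^k ≤ a² k! exp(b²) ≤ a² m exp(b²)`, i.e. `m ≤ a² exp(b²)`.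
-/

open Nat Finset

theorem Finset.factorial_card_le_prod {s : Finset ℕ} (hs : 0 ∉ s) : (#s)! ≤ ∏ n ∈ s, n := by
  induction s using Finset.induction_on_max with
  | empty => simp
  | insert a s hmax ih =>
    have has : a ∉ s := fun h => (hmax a h).false
    have hpos : ∀ n ∈ s, 0 < n := fun n hn =>
      Nat.pos_of_ne_zero fun h => hs (h ▸ mem_insert_of_mem hn)
    have hcard : #s + 1 ≤ a := by
      have := card_le_card fun n hn => mem_Ico.mpr ⟨hpos n hn, hmax n hn⟩
      grind [Nat.card_Ico]
    rw [card_insert_of_notMem has, prod_insert has, factorial_succ]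
    exact Nat.mul_le_mul hcard (ih fun h => hs (mem_insert_of_mem h))

theorem Nat.factorial_card_primeFactors_le {m : ℕ} (hm : m ≠ 0) : (#m.primeFactors)! ≤ m :=
  (factorial_card_le_prod fun h => Nat.not_prime_zero (prime_of_mem_primeFactors h)).trans
    (Nat.le_of_dvd (Nat.pos_of_ne_zero hm) (prod_primeFactors_dvd m))

theorem Real.pow_le_factorial_mul_exp {x : ℝ} (hx : 0 ≤ x) (k : ℕ) : x ^ k ≤ k ! * exp x := by
  have := pow_div_factorial_le_exp x hx k
  rwa [div_le_iff₀ (by positivity), mul_comm] at this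

theorem le_sq_mul_exp_sq_of_le_mul_pow_card_primeFactors {a b : ℝ} {m : ℕ} (hm : m ≠ 0)
    (h : (m : ℝ) ≤ a * b ^ #m.primeFactors) : (m : ℝ) ≤ a ^ 2 * Real.exp (b ^ 2) := by
  set k := #m.primeFactors
  have hm_pos : (0 : ℝ) < m := by positivity
  have hfac : (k ! : ℝ) ≤ m := by exact_mod_cast factorial_card_primeFactors_le hm
  have hsq : (m : ℝ) * m ≤ (a ^ 2 * Real.exp (b ^ 2)) * m :=
    calc (m : ℝ) * m ≤ (a * b ^ k) * (a * b ^ k) := mul_self_le_mul_self hm_pos.le h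
      _ = a ^ 2 * (b ^ 2) ^ k := by ring
      _ ≤ a ^ 2 * (k ! * Real.exp (b ^ 2)) := by
        gcongr; exact Real.pow_le_factorial_mul_exp (sq_nonneg b) k
      _ ≤ a ^ 2 * (m * Real.exp (b ^ 2)) := by gcongr
      _ = (a ^ 2 * Real.exp (b ^ 2)) * m := by ring
  exact le_of_mul_le_mul_right hsq hm_pos

theorem statement0_general (a b : ℝ) (hb : 1 ≤ b) (m : ℕ) (hm : 0 < m)
    (h : (m : ℝ) ≤ a * b ^ m.primeFactors.card) :
    (m : ℝ) ≤ 16 * a ^ 2 * Real.exp (b ^ 6) := by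
  have hexp : Real.exp (b ^ 2) ≤ Real.exp (b ^ 6) :=
    Real.exp_le_exp.mpr (pow_le_pow_right₀ hb (by norm_num))
  calc (m : ℝ) ≤ a ^ 2 * Real.exp (b ^ 2) := le_sq_mul_exp_sq_of_le_mul_pow_card_primeFactors hm.ne' h
    _ ≤ 1 * a ^ 2 * Real.exp (b ^ 6) := by rw [one_mul]; gcongr
    _ ≤ 16 * a ^ 2 * Real.exp (b ^ 6) := by gcongr; norm_num

/-- If `a, b ≥ 1` are real and `m` is a positive integer with
`m ≤ a · b^{ν(m)}`, where `ν(m)` is the number of distinct prime divisors of `m`,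
then `m ≤ 16 a² exp(b⁶)`. -/
theorem statement0 (a b : ℝ) (ha : 1 ≤ a) (hb : 1 ≤ b) (m : ℕ) (hm : 0 < m)
    (h : (m : ℝ) ≤ a * b ^ m.primeFactors.card) :
    (m : ℝ) ≤ 16 * a ^ 2 * Real.exp (b ^ 6) :=
  statement0_general a b hb m hm h
end

section
/- Let f ∈ ℤ[x] be a nonconstant polynomial with nonzero discriminant (equivalently, f and its derivative are coprime in ℚ[x]). Then every positive integer W such that W divides f(x) for every x ∈ ℤ satisfies W ≤ ‖f‖^{2·deg(f)} · exp(5000 · deg(f)⁶). -/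
/-- The maximum of the absolute values of the coefficients of an integer polynomial,
as a real number. -/
noncomputable def polyNorm (f : Polynomial ℤ) : ℝ :=
  ((f.support.sup fun i => (f.coeff i).natAbs : ℕ) : ℝ)

/-!
A nonzero polynomial of degree `d` cannot vanish at all of `0, 1, …, d`, so
`W ∣ f(n) ≠ 0` for some `0 ≤ n ≤ d`, whence `W ≤ |f(n)| ≤ (d + 1) ‖f‖ d^d`. Finally
`(d + 1) d^d ≤ (d + 1)^(d + 1) ≤ exp(d (d + 1)) ≤ exp(5000 d^6)` and `‖f‖ ≤ ‖f‖^(2d)`.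
-/

open Polynomial

namespace Polynomial

theorem exists_eval_natCast_ne_zero {R : Type*} [CommRing R] [IsDomain R] [CharZero R]
    {f : R[X]} (hf : f ≠ 0) : ∃ n : ℕ, n ≤ f.natDegree ∧ f.eval (n : R) ≠ 0 := by
  classical
  by_contra! h
  refine hf (f.eq_zero_of_natDegree_lt_card_of_eval_eq_zero'
    ((Finset.range (f.natDegree + 1)).image (Nat.cast : ℕ → R)) ?_ ?_)
  · simp only [Finset.mem_image, Finset.mem_range]
    rintro _ ⟨n, hn, rfl⟩
    exact h n (Nat.lt_succ_iff.mp hn)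
  · rw [Finset.card_image_of_injective _ Nat.cast_injective, Finset.card_range]
    exact Nat.lt_succ_self _

theorem abs_eval_le_of_abs_coeff_le {R : Type*} [CommRing R] [LinearOrder R]
    [IsStrictOrderedRing R] (f : R[X]) {B r x : R} (hB : ∀ i, |f.coeff i| ≤ B) (hr : 1 ≤ r)
    (hx : |x| ≤ r) : |f.eval x| ≤ (f.natDegree + 1) * B * r ^ f.natDegree := by
  have hB0 : 0 ≤ B := (abs_nonneg _).trans (hB 0)
  calc |f.eval x| = |∑ i ∈ Finset.range (f.natDegree + 1), f.coeff i * x ^ i| := by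
        rw [eval_eq_sum_range]
    _ ≤ ∑ i ∈ Finset.range (f.natDegree + 1), |f.coeff i * x ^ i| :=
        Finset.abs_sum_le_sum_abs _ _
    _ ≤ ∑ _i ∈ Finset.range (f.natDegree + 1), B * r ^ f.natDegree := by
        refine Finset.sum_le_sum fun i hi => ?_
        rw [abs_mul, abs_pow]
        have hi : i ≤ f.natDegree := Nat.lt_succ_iff.mp (Finset.mem_range.mp hi)
        exact mul_le_mul (hB i) ((pow_le_pow_left₀ (abs_nonneg x) hx i).trans
          (pow_le_pow_right₀ hr hi)) (by positivity) hB0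
    _ = (f.natDegree + 1) * B * r ^ f.natDegree := by
        rw [Finset.sum_const, Finset.card_range, nsmul_eq_mul, Nat.cast_succ, mul_assoc]

end Polynomial

theorem polyNorm_nonneg (f : ℤ[X]) : 0 ≤ polyNorm f :=
  Nat.cast_nonneg _

theorem abs_coeff_le_polyNorm (f : ℤ[X]) (i : ℕ) : |(f.coeff i : ℝ)| ≤ polyNorm f := by
  by_cases hi : i ∈ f.support
  · rw [← Int.cast_abs, Int.abs_eq_natAbs, Int.cast_natCast, polyNorm]
    exact_mod_cast Finset.le_sup (f := fun i => (f.coeff i).natAbs) hi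
  · rw [notMem_support_iff.mp hi, Int.cast_zero, abs_zero]
    exact polyNorm_nonneg f

theorem one_le_polyNorm {f : ℤ[X]} (hf : f ≠ 0) : 1 ≤ polyNorm f := by
  have hlead : (1 : ℝ) ≤ |(f.leadingCoeff : ℝ)| := by
    rw [← Int.cast_abs, ← Int.cast_one, Int.cast_le]
    exact Int.one_le_abs (leadingCoeff_ne_zero.mpr hf)
  exact hlead.trans (abs_coeff_le_polyNorm f _)

theorem succ_mul_pow_self_le_exp (d : ℕ) :
    ((d : ℝ) + 1) * (d : ℝ) ^ d ≤ Real.exp (d * (d + 1)) :=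
  calc ((d : ℝ) + 1) * (d : ℝ) ^ d ≤ ((d : ℝ) + 1) ^ (d + 1) := by
        rw [pow_succ']
        gcongr
        linarith
    _ ≤ Real.exp d ^ (d + 1) := by
        gcongr
        linarith [Real.add_one_le_exp (d : ℝ)]
    _ = Real.exp (d * (d + 1)) := by
        rw [← Real.exp_nat_mul, Nat.cast_succ, mul_comm]

theorem statement2_general (f : Polynomial ℤ) (hdeg : 0 < f.natDegree)
    (W : ℕ) (hdvd : ∀ x : ℤ, (W : ℤ) ∣ f.eval x) :
    (W : ℝ) ≤ polyNorm f ^ (2 * f.natDegree) *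
      Real.exp (5000 * (f.natDegree : ℝ) ^ 6) := by
  set d := f.natDegree
  have hf : f ≠ 0 := ne_zero_of_natDegree_gt hdeg
  have hd1 : (1 : ℝ) ≤ d := by exact_mod_cast hdeg
  obtain ⟨n, hnd, hn⟩ := exists_eval_natCast_ne_zero hf
  have hWn : (W : ℝ) ≤ |((f.eval (n : ℤ) : ℤ) : ℝ)| := by
    rw [← Int.cast_abs, ← Int.cast_natCast, Int.cast_le]
    exact Int.le_of_dvd (abs_pos.mpr hn) ((dvd_abs _ _).mpr (hdvd n))
  have heval : |((f.eval (n : ℤ) : ℤ) : ℝ)| ≤ (d + 1) * polyNorm f * (d : ℝ) ^ d := by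
    have hinj := RingHom.injective_int (Int.castRingHom ℝ)
    have := (f.map (Int.castRingHom ℝ)).abs_eval_le_of_abs_coeff_le
      (x := ((n : ℤ) : ℝ)) (fun i => by simpa using abs_coeff_le_polyNorm f i) hd1
      (by simpa using hnd)
    rwa [eval_intCast_map, natDegree_map_eq_of_injective hinj] at this
  have hnorm : polyNorm f ≤ polyNorm f ^ (2 * d) := le_self_pow₀ (one_le_polyNorm hf) (by omega)
  have hd6 : (d : ℝ) * (d + 1) ≤ 5000 * (d : ℝ) ^ 6 := by
    nlinarith [pow_le_pow_right₀ hd1 (show 2 ≤ 6 by norm_num)]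
  have hnorm_pow : 0 ≤ polyNorm f ^ (2 * d) := pow_nonneg (polyNorm_nonneg f) _
  calc (W : ℝ) ≤ (d + 1) * polyNorm f * (d : ℝ) ^ d := hWn.trans heval
    _ = polyNorm f * (((d : ℝ) + 1) * (d : ℝ) ^ d) := by ring
    _ ≤ polyNorm f ^ (2 * d) * Real.exp (d * (d + 1)) :=
        mul_le_mul hnorm (succ_mul_pow_self_le_exp d) (by positivity) hnorm_pow
    _ ≤ polyNorm f ^ (2 * d) * Real.exp (5000 * (d : ℝ) ^ 6) := by
        gcongr

/-- If `f ∈ ℤ[x]` is nonconstant with nonzero discriminant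
(equivalently, `f` and its derivative are coprime in `ℚ[x]`), then every positive
integer `W` dividing `f(x)` for every integer `x` satisfies
`W ≤ ‖f‖^{2 deg f} · exp(5000 · (deg f)⁶)`. -/
theorem statement2 (f : Polynomial ℤ) (hdeg : 0 < f.natDegree)
    (hcop : IsCoprime (f.map (Int.castRingHom ℚ))
      (Polynomial.derivative (f.map (Int.castRingHom ℚ))))
    (W : ℕ) (hW : 0 < W) (hdvd : ∀ x : ℤ, (W : ℤ) ∣ f.eval x) :
    (W : ℝ) ≤ polyNorm f ^ (2 * f.natDegree) *
      Real.exp (5000 * (f.natDegree : ℝ) ^ 6) :=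
  statement2_general f hdeg W hdvd
end

section
/- Let F ∈ ℤ[x₀, …, x_m] be a polynomial of positive total degree which has no repeated polynomial factors (i.e. F is not divisible by the square of any nonconstant polynomial). Then every positive integer W such that W divides F(x) for every x ∈ ℤ^{m+1} satisfies W ≤ ‖F‖^{2·deg(F)} · exp(6000 · deg(F)⁶), where deg(F) is the total degree of F. -/
open MvPolynomial

/-- The maximum of the absolute values of the coefficients of an integer
multivariate polynomial, as a real number. -/
noncomputable def mvPolyNorm {m : ℕ} (F : MvPolynomial (Fin (m + 1)) ℤ) : ℝ :=
  ((F.support.sup fun d => (F.coeff d).natAbs : ℕ) : ℝ)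

/-!
The mixed forward difference of order `α` at `0` is an integer combination of values of `F` at
integer points, so `W` divides it. If `α` is a monomial of `F` of maximal total degree `d`, this
difference kills every other monomial of `F` and sends `x^α` to `∏ αᵢ!`, so `W` divides the nonzero
integer `coeff α F * ∏ αᵢ!`. Hence `W ≤ ‖F‖ d!`, and `d! ≤ d^d ≤ e^{d²}`.
-/

open Finset Nat Function fwdDiff

section MixedDifferences

variable {R : Type*} [CommRing R]

lemma fwdDiff_iter_pow_apply_zero (n j : ℕ) :
    (Δ_[1])^[n] (fun r : R ↦ r ^ j) 0 =
      ∑ k ∈ range (n + 1), (-1) ^ (n - k) * (n.choose k : R) * (k : R) ^ j := by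
  rw [fwdDiff_iter_eq_sum_shift]
  refine sum_congr rfl fun k _ ↦ ?_
  simp [zsmul_eq_mul]

variable {σ : Type*} [Fintype σ]

lemma Finset.exists_lt_of_sum_le_of_ne {f g : σ → ℕ} (hle : ∑ i, f i ≤ ∑ i, g i) (hne : f ≠ g) :
    ∃ j, f j < g j := by
  by_contra! h
  obtain ⟨j, hj⟩ := Function.ne_iff.mp hne
  exact (sum_lt_sum (fun i _ ↦ h i) ⟨j, mem_univ j, (h j).lt_of_ne' hj⟩).not_ge hle

theorem sum_piFinset_prod_mul_eval [DecidableEq σ] (s : σ → Finset ℕ) (w : σ → ℕ → R)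
    (F : MvPolynomial σ R) :
    ∑ β ∈ Fintype.piFinset s, (∏ i, w i (β i)) * eval (fun i ↦ (β i : R)) F =
      ∑ γ ∈ F.support, F.coeff γ * ∏ i, ∑ b ∈ s i, w i b * (b : R) ^ γ i := by
  simp_rw [eval_eq', mul_sum, prod_univ_sum, mul_sum]
  rw [sum_comm]
  refine sum_congr rfl fun γ _ ↦ sum_congr rfl fun β _ ↦ ?_
  rw [prod_mul_distrib]
  ring

theorem sum_piFinset_alternating_choose_mul_eval [DecidableEq σ] {F : MvPolynomial σ R}
    {α : σ →₀ ℕ} (hF : F.totalDegree ≤ ∑ i, α i) :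
    ∑ β ∈ Fintype.piFinset (fun i ↦ range (α i + 1)),
        (∏ i, (-1) ^ (α i - β i) * ((α i).choose (β i) : R)) * eval (fun i ↦ (β i : R)) F =
      F.coeff α * ∏ i, ((α i)! : R) := by
  rw [sum_piFinset_prod_mul_eval _ fun i b ↦ (-1) ^ (α i - b) * ((α i).choose b : R)]
  simp_rw [← fwdDiff_iter_pow_apply_zero]
  rw [sum_eq_single α]
  · simp [fwdDiff_iter_eq_factorial]
  · intro γ hγ hne
    have hle : ∑ i, γ i ≤ ∑ i, α i := by
      rw [← Finsupp.degree_eq_sum]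
      exact (le_totalDegree hγ).trans hF
    obtain ⟨j, hj⟩ := exists_lt_of_sum_le_of_ne hle (DFunLike.coe_injective.ne hne)
    rw [prod_eq_zero (mem_univ j) (by simp [fwdDiff_iter_pow_eq_zero_of_lt hj]), mul_zero]
  · intro hα
    rw [notMem_support_iff.mp hα, zero_mul]

theorem dvd_coeff_mul_prod_factorial_of_forall_dvd_eval [DecidableEq σ] {F : MvPolynomial σ R}
    {α : σ →₀ ℕ} (hF : F.totalDegree ≤ ∑ i, α i) {a : R} (ha : ∀ x : σ → R, a ∣ eval x F) :
    a ∣ F.coeff α * ∏ i, ((α i)! : R) :=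
  sum_piFinset_alternating_choose_mul_eval hF ▸ dvd_sum fun _ _ ↦ (ha _).mul_left _

end MixedDifferences

lemma exists_mem_support_sum_eq_totalDegree {R σ : Type*} [CommSemiring R] [Fintype σ]
    {F : MvPolynomial σ R} (hF : F ≠ 0) : ∃ α ∈ F.support, ∑ i, α i = F.totalDegree := by
  obtain ⟨α, hα, h⟩ := exists_mem_eq_sup _ (support_nonempty.mpr hF) fun s ↦ s.sum fun _ e ↦ e
  exact ⟨α, hα, by rw [← Finsupp.degree_eq_sum]; exact h.symm⟩

lemma natAbs_coeff_le_mvPolyNorm {m : ℕ} (F : MvPolynomial (Fin (m + 1)) ℤ)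
    (d : Fin (m + 1) →₀ ℕ) : ((F.coeff d).natAbs : ℝ) ≤ mvPolyNorm F := by
  by_cases hd : d ∈ F.support
  · unfold mvPolyNorm
    exact_mod_cast le_sup (f := fun d ↦ (F.coeff d).natAbs) hd
  · simp only [notMem_support_iff.mp hd, Int.natAbs_zero, Nat.cast_zero, mvPolyNorm]
    positivity

lemma factorial_le_exp_sq (n : ℕ) : (n ! : ℝ) ≤ Real.exp (n ^ 2) :=
  calc (n ! : ℝ) ≤ (n : ℝ) ^ n := by exact_mod_cast n.factorial_le_pow
    _ ≤ Real.exp n ^ n := by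
        gcongr
        exact (le_add_of_nonneg_right zero_le_one).trans (Real.add_one_le_exp _)
    _ = Real.exp (n ^ 2) := by rw [← Real.exp_nat_mul]; ring_nf

theorem statement3_general (m : ℕ) (F : MvPolynomial (Fin (m + 1)) ℤ)
    (hdeg : 0 < F.totalDegree)
    (W : ℕ) (hdvd : ∀ x : Fin (m + 1) → ℤ, (W : ℤ) ∣ eval x F) :
    (W : ℝ) ≤ mvPolyNorm F ^ (2 * F.totalDegree) *
      Real.exp (6000 * (F.totalDegree : ℝ) ^ 6) := by
  have hF : F ≠ 0 := by rintro rfl; simp at hdeg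
  obtain ⟨α, hα, hαd⟩ := exists_mem_support_sum_eq_totalDegree hF
  set d := F.totalDegree
  have hc : F.coeff α ≠ 0 := mem_support_iff.mp hα
  have hW : W ≤ (F.coeff α).natAbs * ∏ i, (α i)! := by
    refine Nat.le_of_dvd (by positivity) ?_
    simpa [Int.natAbs_mul, ← Nat.cast_prod, Int.natAbs_natCast] using
      Int.natCast_dvd.mp (dvd_coeff_mul_prod_factorial_of_forall_dvd_eval hαd.ge hdvd)
  have hfac : ∏ i, (α i)! ≤ d ! := by
    rw [← hαd]
    exact Nat.le_of_dvd (factorial_pos _) (prod_factorial_dvd_factorial_sum _ _)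
  have hnorm : 1 ≤ mvPolyNorm F :=
    (Nat.one_le_cast.mpr (Int.natAbs_pos.mpr hc)).trans (natAbs_coeff_le_mvPolyNorm F α)
  have hexp : (d : ℝ) ^ 2 ≤ 6000 * (d : ℝ) ^ 6 := by
    exact_mod_cast (Nat.pow_le_pow_right hdeg (by norm_num)).trans
      (Nat.le_mul_of_pos_left _ (by norm_num))
  calc (W : ℝ) ≤ (F.coeff α).natAbs * (d ! : ℕ) := by
        exact_mod_cast hW.trans (Nat.mul_le_mul_left _ hfac)
    _ ≤ mvPolyNorm F ^ (2 * d) * Real.exp (6000 * (d : ℝ) ^ 6) := by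
        gcongr
        · exact (natAbs_coeff_le_mvPolyNorm F α).trans (le_self_pow₀ hnorm (by omega))
        · exact (factorial_le_exp_sq d).trans (Real.exp_le_exp.mpr hexp)

/-- If `F ∈ ℤ[x₀,…,x_m]` has positive total degree and no repeated
polynomial factors (it is not divisible by the square of any nonconstant polynomial),
then every positive integer `W` dividing `F(x)` for every `x ∈ ℤ^{m+1}` satisfies
`W ≤ ‖F‖^{2 deg F} · exp(6000 · (deg F)⁶)`. -/
theorem statement3 (m : ℕ) (F : MvPolynomial (Fin (m + 1)) ℤ)
    (hdeg : 0 < F.totalDegree)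
    (hsqfree : ∀ g : MvPolynomial (Fin (m + 1)) ℤ, 0 < g.totalDegree → ¬ g ^ 2 ∣ F)
    (W : ℕ) (hW : 0 < W) (hdvd : ∀ x : Fin (m + 1) → ℤ, (W : ℤ) ∣ eval x F) :
    (W : ℝ) ≤ mvPolyNorm F ^ (2 * F.totalDegree) *
      Real.exp (6000 * (F.totalDegree : ℝ) ^ 6) :=
  statement3_general m F hdeg W hdvd
end

section
/- Let a₀, a₁, d₀, d₁, f₀, f₁, b₀, b₁, b₂, e₀, e₁, e₂ be integers and let F(x₀,x₁,x₂,x₃) = a(x₀,x₁)x₂² + d(x₀,x₁)x₂x₃ + f(x₀,x₁)x₃² + b(x₀,x₁)x₂ + e(x₀,x₁)x₃. Assume F defines a smooth surface in ℙ³ (the only common complex zero of the four partial derivatives of F is the origin). Then: the binary forms a(s,t), b(s,t), e(s,t), f(s,t) and d(s,t)² − 4a(s,t)f(s,t) are not identically zero; the forms a, d, f have no common nonconstant polynomial divisor in ℚ[s,t]; and the forms b, e have no common nonconstant polynomial divisor in ℚ[s,t]. -/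
/-!
Smoothness is only tested at points of the lines `x₀ = x₁ = 0` and `x₂ = x₃ = 0`.
At `(0, 0, y₀, y₁)` the partials `∂₂F, ∂₃F` vanish and `∂₀F, ∂₁F` are the quadratic forms
`Qᵢ(y) = aᵢ y₀² + dᵢ y₀ y₁ + fᵢ y₁²`; at `(x₀, x₁, 0, 0)` only `∂₂F = b(x)` and `∂₃F = e(x)`
survive. So `Q₀, Q₁` have no common zero in `ℂ² ∖ 0`, nor do `b, e`, and the negation of each
conclusion produces such a common zero.
-/

open MvPolynomial

/-- The binary linear form `a(s,t) = a₀ s + a₁ t` in `ℚ[s,t]`. -/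
noncomputable def binLin (a₀ a₁ : ℤ) : MvPolynomial (Fin 2) ℚ :=
  C (a₀ : ℚ) * X 0 + C (a₁ : ℚ) * X 1

/-- The binary quadratic form `b(s,t) = b₀ s² + b₁ st + b₂ t²` in `ℚ[s,t]`. -/
noncomputable def binQuad (b₀ b₁ b₂ : ℤ) : MvPolynomial (Fin 2) ℚ :=
  C (b₀ : ℚ) * X 0 ^ 2 + C (b₁ : ℚ) * X 0 * X 1 + C (b₂ : ℚ) * X 1 ^ 2

/-- The cubic form
`F = a(x₀,x₁)x₂² + d(x₀,x₁)x₂x₃ + f(x₀,x₁)x₃² + b(x₀,x₁)x₂ + e(x₀,x₁)x₃`. -/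
noncomputable def skewCubic (a₀ a₁ d₀ d₁ f₀ f₁ b₀ b₁ b₂ e₀ e₁ e₂ : ℤ) :
    MvPolynomial (Fin 4) ℚ :=
  (C (a₀ : ℚ) * X 0 + C (a₁ : ℚ) * X 1) * X 2 ^ 2 +
  (C (d₀ : ℚ) * X 0 + C (d₁ : ℚ) * X 1) * X 2 * X 3 +
  (C (f₀ : ℚ) * X 0 + C (f₁ : ℚ) * X 1) * X 3 ^ 2 +
  (C (b₀ : ℚ) * X 0 ^ 2 + C (b₁ : ℚ) * X 0 * X 1 + C (b₂ : ℚ) * X 1 ^ 2) * X 2 +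
  (C (e₀ : ℚ) * X 0 ^ 2 + C (e₁ : ℚ) * X 0 * X 1 + C (e₂ : ℚ) * X 1 ^ 2) * X 3

theorem isRelPrime_X_X {σ R : Type*} [CommRing R] [IsDomain R] {i j : σ} (hij : i ≠ j) :
    IsRelPrime (X i : MvPolynomial σ R) (X j) :=
  X_prime.irreducible.isRelPrime_iff_not_dvd.mpr (by simpa using hij)

theorem exists_ne_zero_quadForm_eq_zero {K : Type*} [Field K] [IsAlgClosed K] (α β γ : K) :
    ∃ x : Fin 2 → K, x ≠ 0 ∧ α * x 0 ^ 2 + β * x 0 * x 1 + γ * x 1 ^ 2 = 0 := by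
  by_cases hα : α = 0
  · exact ⟨![1, 0], by simp, by simp [hα]⟩
  obtain ⟨z, hz⟩ := IsAlgClosed.exists_root
    (Polynomial.C α * Polynomial.X ^ 2 + Polynomial.C β * Polynomial.X + Polynomial.C γ)
    (by rw [Polynomial.degree_quadratic hα]; norm_num)
  exact ⟨![z, 1], by simp, by simpa using hz⟩

section
variable {K : Type*} [CommRing K] [Algebra ℚ K] (x : Fin 2 → K)

@[simp]
theorem aeval_binLin (c₀ c₁ : ℤ) : aeval x (binLin c₀ c₁) = c₀ * x 0 + c₁ * x 1 := by
  simp [binLin]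

@[simp]
theorem aeval_binQuad (c₀ c₁ c₂ : ℤ) :
    aeval x (binQuad c₀ c₁ c₂) = c₀ * x 0 ^ 2 + c₁ * x 0 * x 1 + c₂ * x 1 ^ 2 := by
  simp [binQuad]

end

/-- By the Nullstellensatz, if `g` vanished only at the origin it would divide a power of every
variable; two distinct variables are coprime, so `g` would be a unit. -/
theorem exists_ne_zero_aeval_eq_zero {σ k K : Type*} [Finite σ] [Nontrivial σ] [Field k]
    [Field K] [IsAlgClosed K] [Algebra k K] {g : MvPolynomial σ k} (hg : 0 < g.totalDegree) :
    ∃ x : σ → K, x ≠ 0 ∧ aeval x g = 0 := by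
  by_contra! h
  have dvd_X_pow (i : σ) : ∃ n, g ∣ X i ^ n := by
    have hXi : X i ∈ vanishingIdeal k (zeroLocus K (Ideal.span {g})) := by
      rw [mem_vanishingIdeal_iff]
      intro x hx
      obtain rfl : x = 0 := by
        by_contra hx0
        exact h x hx0 (hx g (Ideal.subset_span rfl))
      simp
    rw [vanishingIdeal_zeroLocus_eq_radical] at hXi
    obtain ⟨n, hn⟩ := hXi
    exact ⟨n, Ideal.mem_span_singleton.mp hn⟩
  obtain ⟨i, j, hij⟩ := exists_pair_ne σ
  obtain ⟨m, hm⟩ := dvd_X_pow i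
  obtain ⟨n, hn⟩ := dvd_X_pow j
  have hunit : IsUnit g := (isRelPrime_X_X hij).pow hm hn
  have := totalDegree_le_of_dvd_of_isDomain hunit.dvd one_ne_zero
  rw [totalDegree_one] at this
  omega

theorem exists_ne_zero_aeval_eq_zero_of_dvd {σ k K : Type*} [Finite σ] [Nontrivial σ] [Field k]
    [Field K] [IsAlgClosed K] [Algebra k K] {g : MvPolynomial σ k} (hg : 0 < g.totalDegree) :
    ∃ x : σ → K, x ≠ 0 ∧ ∀ p, g ∣ p → aeval x p = 0 := by
  obtain ⟨x, hx, hgx⟩ := exists_ne_zero_aeval_eq_zero (K := K) hg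
  exact ⟨x, hx, fun p hp => zero_dvd_iff.mp (hgx ▸ map_dvd (aeval x) hp)⟩

/-- `d² = 4af` makes `d` and `f` multiples of `a`, so they vanish at the zero `(a₁, -a₀)` of `a`:
the squared minors `(a₀d₁ - a₁d₀)²` and `(a₀f₁ - a₁f₀)²` are combinations of the coefficients
of `d² - 4af`. -/
theorem aeval_binLin_eq_zero_of_discr_eq_zero {a₀ a₁ d₀ d₁ f₀ f₁ : ℤ}
    (h : binLin d₀ d₁ ^ 2 - 4 * binLin a₀ a₁ * binLin f₀ f₁ = 0) :
    aeval ![(a₁ : ℂ), -a₀] (binLin d₀ d₁) = 0 ∧ aeval ![(a₁ : ℂ), -a₀] (binLin f₀ f₁) = 0 := by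
  have hD (x : Fin 2 → ℂ) : ((d₀ : ℂ) * x 0 + d₁ * x 1) ^ 2 -
      4 * ((a₀ : ℂ) * x 0 + a₁ * x 1) * ((f₀ : ℂ) * x 0 + f₁ * x 1) = 0 := by
    simpa using congrArg (aeval x) h
  have E₀ : (d₀ : ℂ) ^ 2 - 4 * a₀ * f₀ = 0 := by simpa using hD ![1, 0]
  have E₁ : (d₁ : ℂ) ^ 2 - 4 * a₁ * f₁ = 0 := by simpa using hD ![0, 1]
  have E₀₁ : ((d₀ : ℂ) + d₁) ^ 2 - 4 * (a₀ + a₁) * (f₀ + f₁) = 0 := by simpa using hD ![1, 1]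
  have E : (d₀ : ℂ) * d₁ - 2 * (a₀ * f₁ + a₁ * f₀) = 0 := by
    linear_combination (E₀₁ - E₀ - E₁) / 2
  simp only [aeval_binLin, Matrix.cons_val_zero, Matrix.cons_val_one]
  constructor <;> refine pow_eq_zero_iff two_ne_zero |>.mp ?_
  · linear_combination a₁ ^ 2 * E₀ + a₀ ^ 2 * E₁ - 2 * a₀ * a₁ * E
  · linear_combination
      (d₀ ^ 2 * E₁ + 4 * a₁ * f₁ * E₀ - (d₀ * d₁ + 2 * (a₀ * f₁ + a₁ * f₀)) * E) / 4

def IsSmoothSurface (F : MvPolynomial (Fin 4) ℚ) : Prop :=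
  ∀ x : Fin 4 → ℂ, (∀ i, aeval x (pderiv i F) = 0) → x = 0

namespace IsSmoothSurface

variable {a₀ a₁ d₀ d₁ f₀ f₁ b₀ b₁ b₂ e₀ e₁ e₂ : ℤ}
  (hF : IsSmoothSurface (skewCubic a₀ a₁ d₀ d₁ f₀ f₁ b₀ b₁ b₂ e₀ e₁ e₂))
include hF

theorem eq_zero_of_pencil {x : Fin 2 → ℂ}
    (h₀ : (a₀ : ℂ) * x 0 ^ 2 + d₀ * x 0 * x 1 + f₀ * x 1 ^ 2 = 0)
    (h₁ : (a₁ : ℂ) * x 0 ^ 2 + d₁ * x 0 * x 1 + f₁ * x 1 ^ 2 = 0) : x = 0 := by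
  have hx := hF ![0, 0, x 0, x 1] (fun i => by
    fin_cases i <;> simp [skewCubic]
    · linear_combination h₀
    · linear_combination h₁)
  ext i
  fin_cases i
  · simpa using congrFun hx 2
  · simpa using congrFun hx 3

theorem eq_zero_of_binQuad {x : Fin 2 → ℂ} (hb : aeval x (binQuad b₀ b₁ b₂) = 0)
    (he : aeval x (binQuad e₀ e₁ e₂) = 0) : x = 0 := by
  rw [aeval_binQuad] at hb he
  have hx := hF ![x 0, x 1, 0, 0] (fun i => by
    fin_cases i <;> simp [skewCubic]
    · linear_combination hb
    · linear_combination he)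
  ext i
  fin_cases i
  · simpa using congrFun hx 0
  · simpa using congrFun hx 1

/-- `x₀ Q₀ + x₁ Q₁` is the form `a(x) y₀² + d(x) y₀ y₁ + f(x) y₁²`, so it vanishes identically
and every zero of one `Qᵢ` is a zero of the other. -/
theorem eq_zero_of_binLin {x : Fin 2 → ℂ} (ha : aeval x (binLin a₀ a₁) = 0)
    (hd : aeval x (binLin d₀ d₁) = 0) (hf : aeval x (binLin f₀ f₁) = 0) : x = 0 := by
  rw [aeval_binLin] at ha hd hf
  have pencil (y : Fin 2 → ℂ) :
      x 0 * ((a₀ : ℂ) * y 0 ^ 2 + d₀ * y 0 * y 1 + f₀ * y 1 ^ 2) +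
        x 1 * ((a₁ : ℂ) * y 0 ^ 2 + d₁ * y 0 * y 1 + f₁ * y 1 ^ 2) = 0 := by
    linear_combination y 0 ^ 2 * ha + y 0 * y 1 * hd + y 1 ^ 2 * hf
  by_contra hx
  obtain h0 | h1 : x 0 ≠ 0 ∨ x 1 ≠ 0 := by
    by_contra! h
    exact hx (funext (Fin.forall_fin_two.mpr h))
  · obtain ⟨y, hy, hQ₁⟩ := exists_ne_zero_quadForm_eq_zero (a₁ : ℂ) d₁ f₁
    refine hy (hF.eq_zero_of_pencil ?_ hQ₁)
    exact (mul_eq_zero.mp (by linear_combination pencil y - x 1 * hQ₁)).resolve_left h0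
  · obtain ⟨y, hy, hQ₀⟩ := exists_ne_zero_quadForm_eq_zero (a₀ : ℂ) d₀ f₀
    refine hy (hF.eq_zero_of_pencil hQ₀ ?_)
    exact (mul_eq_zero.mp (by linear_combination pencil y - x 0 * hQ₀)).resolve_left h1

theorem a_ne_zero : binLin a₀ a₁ ≠ 0 := by
  intro h
  have ha (x : Fin 2 → ℂ) : (a₀ : ℂ) * x 0 + a₁ * x 1 = 0 := by
    simpa using congrArg (aeval x) h
  have := hF.eq_zero_of_pencil (x := ![1, 0]) (by simpa using ha ![1, 0])
    (by simpa using ha ![0, 1])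
  simpa using congrFun this 0

theorem f_ne_zero : binLin f₀ f₁ ≠ 0 := by
  intro h
  have hf (x : Fin 2 → ℂ) : (f₀ : ℂ) * x 0 + f₁ * x 1 = 0 := by
    simpa using congrArg (aeval x) h
  have := hF.eq_zero_of_pencil (x := ![0, 1]) (by simpa using hf ![1, 0])
    (by simpa using hf ![0, 1])
  simpa using congrFun this 1

theorem b_ne_zero : binQuad b₀ b₁ b₂ ≠ 0 := by
  intro h
  obtain ⟨x, hx, he⟩ := exists_ne_zero_quadForm_eq_zero (e₀ : ℂ) e₁ e₂
  exact hx (hF.eq_zero_of_binQuad (by simp [h]) (by simpa using he))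

theorem e_ne_zero : binQuad e₀ e₁ e₂ ≠ 0 := by
  intro h
  obtain ⟨x, hx, hb⟩ := exists_ne_zero_quadForm_eq_zero (b₀ : ℂ) b₁ b₂
  exact hx (hF.eq_zero_of_binQuad (by simpa using hb) (by simp [h]))

theorem discr_ne_zero : binLin d₀ d₁ ^ 2 - 4 * binLin a₀ a₁ * binLin f₀ f₁ ≠ 0 := by
  intro h
  obtain ⟨hd, hf⟩ := aeval_binLin_eq_zero_of_discr_eq_zero h
  have hx := hF.eq_zero_of_binLin (by simp; ring) hd hf
  have h₀ : (a₀ : ℂ) = 0 := by simpa using congrFun hx 1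
  have h₁ : (a₁ : ℂ) = 0 := by simpa using congrFun hx 0
  apply hF.a_ne_zero
  simp [binLin, show a₀ = 0 by exact_mod_cast h₀, show a₁ = 0 by exact_mod_cast h₁]

theorem not_common_dvd_a_d_f (g : MvPolynomial (Fin 2) ℚ) (hg : 0 < g.totalDegree) :
    ¬ (g ∣ binLin a₀ a₁ ∧ g ∣ binLin d₀ d₁ ∧ g ∣ binLin f₀ f₁) := by
  rintro ⟨ha, hd, hf⟩
  obtain ⟨x, hx, vanish⟩ := exists_ne_zero_aeval_eq_zero_of_dvd (K := ℂ) hg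
  exact hx (hF.eq_zero_of_binLin (vanish _ ha) (vanish _ hd) (vanish _ hf))

theorem not_common_dvd_b_e (g : MvPolynomial (Fin 2) ℚ) (hg : 0 < g.totalDegree) :
    ¬ (g ∣ binQuad b₀ b₁ b₂ ∧ g ∣ binQuad e₀ e₁ e₂) := by
  rintro ⟨hb, he⟩
  obtain ⟨x, hx, vanish⟩ := exists_ne_zero_aeval_eq_zero_of_dvd (K := ℂ) hg
  exact hx (hF.eq_zero_of_binQuad (vanish _ hb) (vanish _ he))

end IsSmoothSurface

/-- If the cubic form `F` above defines a smooth surface in `ℙ³`, then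
the binary forms `a, b, e, f` and `d² − 4af` are not identically zero, the forms
`a, d, f` have no common nonconstant polynomial divisor in `ℚ[s,t]`, and neither do
`b` and `e`. -/
theorem statement10 (a₀ a₁ d₀ d₁ f₀ f₁ b₀ b₁ b₂ e₀ e₁ e₂ : ℤ)
    (hsmooth : ∀ x : Fin 4 → ℂ,
      (∀ i, MvPolynomial.aeval x
        (pderiv i (skewCubic a₀ a₁ d₀ d₁ f₀ f₁ b₀ b₁ b₂ e₀ e₁ e₂)) = 0) → x = 0) :
    binLin a₀ a₁ ≠ 0 ∧ binQuad b₀ b₁ b₂ ≠ 0 ∧ binQuad e₀ e₁ e₂ ≠ 0 ∧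
    binLin f₀ f₁ ≠ 0 ∧
    (binLin d₀ d₁) ^ 2 - 4 * binLin a₀ a₁ * binLin f₀ f₁ ≠ 0 ∧
    (∀ g : MvPolynomial (Fin 2) ℚ, 0 < g.totalDegree →
      ¬ (g ∣ binLin a₀ a₁ ∧ g ∣ binLin d₀ d₁ ∧ g ∣ binLin f₀ f₁)) ∧
    (∀ g : MvPolynomial (Fin 2) ℚ, 0 < g.totalDegree →
      ¬ (g ∣ binQuad b₀ b₁ b₂ ∧ g ∣ binQuad e₀ e₁ e₂)) := by
  have hF : IsSmoothSurface (skewCubic a₀ a₁ d₀ d₁ f₀ f₁ b₀ b₁ b₂ e₀ e₁ e₂) := hsmooth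
  exact ⟨hF.a_ne_zero, hF.b_ne_zero, hF.e_ne_zero, hF.f_ne_zero, hF.discr_ne_zero,
    hF.not_common_dvd_a_d_f, hF.not_common_dvd_b_e⟩
end

section
/- Let a₀, a₁, d₀, d₁, f₀, f₁, b₀, b₁, b₂, e₀, e₁, e₂ be integers satisfying: (1) gcd(a₀,a₁,d₀,d₁,f₀,f₁) = 1 and gcd(b₀,b₁,b₂,e₀,e₁,e₂) = 1; (2) gcd(a₀b₀, 6) = 1 and 6 divides each of a₁, d₀, d₁, f₀, f₁, b₁, b₂, e₀, e₁, e₂. Then for every prime p there exist integers s₀, t₀ with p ∤ s₀ and p ∤ t₀ such that p does not divide gcd(b(s₀,t₀), e(s₀,t₀)) and p does not divide gcd(a(s₀,t₀), d(s₀,t₀), f(s₀,t₀)). -/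
/-!
Reduce modulo `p` and take `s₀ = 1`. For `p ∣ 6` the choice `t₀ = 1` works, since modulo `p`
only `a₀` and `b₀` survive and `p ∤ a₀ b₀`. For `p ≥ 5` the gcd conditions make one of
`b(1, X), e(1, X)` and one of `a(1, X), d(1, X), f(1, X)` nonzero polynomials over `𝔽_p`;
`X` times their product has degree at most `4 < p`, so some `t₀ ∈ 𝔽_p` is not a root of it.
-/

open Polynomial Cardinal

namespace Polynomial

variable {R : Type*}

theorem C_mul_X_sq_add_C_mul_X_add_C_eq_zero_iff [Semiring R] {a b c : R} :
    C a * X ^ 2 + C b * X + C c = 0 ↔ a = 0 ∧ b = 0 ∧ c = 0 := by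
  refine ⟨fun h => ⟨?_, ?_, ?_⟩, fun ⟨ha, hb, hc⟩ => by simp [ha, hb, hc]⟩
  · simpa using congrArg (coeff · 2) h
  · simpa using congrArg (coeff · 1) h
  · simpa using congrArg (coeff · 0) h

theorem C_mul_X_add_C_eq_zero_iff [Semiring R] {a b : R} :
    C a * X + C b = 0 ↔ a = 0 ∧ b = 0 := by
  refine ⟨fun h => ⟨?_, ?_⟩, fun ⟨ha, hb⟩ => by simp [ha, hb]⟩
  · simpa using congrArg (coeff · 1) h
  · simpa using congrArg (coeff · 0) h

theorem exists_ne_zero_and_exists_eval_ne_zero [CommRing R] [IsDomain R] {ι κ : Type*}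
    (P : ι → R[X]) (Q : κ → R[X]) {m n : ℕ} (hP : ∃ i, P i ≠ 0) (hQ : ∃ j, Q j ≠ 0)
    (hPdeg : ∀ i, (P i).natDegree ≤ m) (hQdeg : ∀ j, (Q j).natDegree ≤ n)
    (hR : m + n + 1 < #R) :
    ∃ x : R, x ≠ 0 ∧ (∃ i, (P i).eval x ≠ 0) ∧ ∃ j, (Q j).eval x ≠ 0 := by
  obtain ⟨i, hi⟩ := hP
  obtain ⟨j, hj⟩ := hQ
  have hdeg : (X * P i * Q j).natDegree ≤ m + n + 1 := by
    rw [natDegree_mul (mul_ne_zero X_ne_zero hi) hj, natDegree_mul X_ne_zero hi, natDegree_X]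
    linarith [hPdeg i, hQdeg j]
  obtain ⟨x, hx⟩ := exists_eval_ne_zero_of_natDegree_lt_card (X * P i * Q j)
    (mul_ne_zero (mul_ne_zero X_ne_zero hi) hj) (lt_of_le_of_lt (by exact_mod_cast hdeg) hR)
  simp only [eval_mul, eval_X, ne_eq, mul_eq_zero, not_or] at hx
  exact ⟨x, hx.1.1, ⟨i, hx.1.2⟩, ⟨j, hx.2⟩⟩

end Polynomial

theorem exists_ne_zero_not_quadratics_zero_not_linears_zero {R : Type*} [CommRing R] [IsDomain R]
    {a₀ a₁ d₀ d₁ f₀ f₁ b₀ b₁ b₂ e₀ e₁ e₂ : R}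
    (hb : ¬(b₀ = 0 ∧ b₁ = 0 ∧ b₂ = 0 ∧ e₀ = 0 ∧ e₁ = 0 ∧ e₂ = 0))
    (ha : ¬(a₀ = 0 ∧ a₁ = 0 ∧ d₀ = 0 ∧ d₁ = 0 ∧ f₀ = 0 ∧ f₁ = 0)) (hR : 4 < #R) :
    ∃ x : R, x ≠ 0 ∧ ¬(b₂ * x ^ 2 + b₁ * x + b₀ = 0 ∧ e₂ * x ^ 2 + e₁ * x + e₀ = 0) ∧
      ¬(a₁ * x + a₀ = 0 ∧ d₁ * x + d₀ = 0 ∧ f₁ * x + f₀ = 0) := by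
  obtain ⟨x, hx, hB, hA⟩ := exists_ne_zero_and_exists_eval_ne_zero (m := 2) (n := 1)
    ![C b₂ * X ^ 2 + C b₁ * X + C b₀, C e₂ * X ^ 2 + C e₁ * X + C e₀]
    ![C a₁ * X + C a₀, C d₁ * X + C d₀, C f₁ * X + C f₀]
    (by
      by_contra! h
      obtain ⟨hb₂, hb₁, hb₀⟩ := C_mul_X_sq_add_C_mul_X_add_C_eq_zero_iff.mp (h 0)
      obtain ⟨he₂, he₁, he₀⟩ := C_mul_X_sq_add_C_mul_X_add_C_eq_zero_iff.mp (h 1)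
      exact hb ⟨hb₀, hb₁, hb₂, he₀, he₁, he₂⟩)
    (by
      by_contra! h
      obtain ⟨ha₁, ha₀⟩ := C_mul_X_add_C_eq_zero_iff.mp (h 0)
      obtain ⟨hd₁, hd₀⟩ := C_mul_X_add_C_eq_zero_iff.mp (h 1)
      obtain ⟨hf₁, hf₀⟩ := C_mul_X_add_C_eq_zero_iff.mp (h 2)
      exact ha ⟨ha₀, ha₁, hd₀, hd₁, hf₀, hf₁⟩)
    (fun i => by fin_cases i <;> exact natDegree_quadratic_le)
    (fun j => by fin_cases j <;> exact natDegree_linear_le)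
    (by norm_num; exact hR)
  refine ⟨x, hx, fun h => ?_, fun h => ?_⟩
  · obtain ⟨i, hi⟩ := hB
    fin_cases i <;> simp [h] at hi
  · obtain ⟨j, hj⟩ := hA
    fin_cases j <;> simp [h] at hj

namespace ZMod

theorem intCast_ne_zero_of_gcd_eq_one {p : ℕ} (hp : p ≠ 1) {a m : ℤ} (h : a.gcd m = 1)
    (hpm : (p : ℤ) ∣ m) : (a : ZMod p) ≠ 0 := by
  rw [ne_eq, intCast_zmod_eq_zero_iff_dvd]
  exact fun hpa => hp (Nat.dvd_one.mp (h ▸ Int.dvd_gcd hpa hpm))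

theorem not_intCast_eq_zero_of_gcd_eq_one {p : ℕ} (hp : p ≠ 1) {x₁ x₂ x₃ x₄ x₅ x₆ : ℤ}
    (h : Nat.gcd (x₁.gcd x₂) (Nat.gcd (x₃.gcd x₄) (x₅.gcd x₆)) = 1) :
    ¬((x₁ : ZMod p) = 0 ∧ (x₂ : ZMod p) = 0 ∧ (x₃ : ZMod p) = 0 ∧ (x₄ : ZMod p) = 0 ∧
      (x₅ : ZMod p) = 0 ∧ (x₆ : ZMod p) = 0) := by
  simp only [intCast_zmod_eq_zero_iff_dvd]
  rintro ⟨h₁, h₂, h₃, h₄, h₅, h₆⟩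
  exact hp (Nat.dvd_one.mp (h ▸ Nat.dvd_gcd (Int.dvd_gcd h₁ h₂)
    (Nat.dvd_gcd (Int.dvd_gcd h₃ h₄) (Int.dvd_gcd h₅ h₆))))

end ZMod

theorem exists_int_of_exists_zmod {a₀ a₁ d₀ d₁ f₀ f₁ b₀ b₁ b₂ e₀ e₁ e₂ : ℤ} {p : ℕ} (hp : p ≠ 1)
    (h : ∃ x : ZMod p, x ≠ 0 ∧
      ¬((b₂ : ZMod p) * x ^ 2 + b₁ * x + b₀ = 0 ∧ (e₂ : ZMod p) * x ^ 2 + e₁ * x + e₀ = 0) ∧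
      ¬((a₁ : ZMod p) * x + a₀ = 0 ∧ (d₁ : ZMod p) * x + d₀ = 0 ∧ (f₁ : ZMod p) * x + f₀ = 0)) :
    ∃ s₀ t₀ : ℤ, ¬ (p : ℤ) ∣ s₀ ∧ ¬ (p : ℤ) ∣ t₀ ∧
      ¬ ((p : ℤ) ∣ (b₀ * s₀ ^ 2 + b₁ * s₀ * t₀ + b₂ * t₀ ^ 2) ∧
         (p : ℤ) ∣ (e₀ * s₀ ^ 2 + e₁ * s₀ * t₀ + e₂ * t₀ ^ 2)) ∧
      ¬ ((p : ℤ) ∣ (a₀ * s₀ + a₁ * t₀) ∧ (p : ℤ) ∣ (d₀ * s₀ + d₁ * t₀) ∧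
         (p : ℤ) ∣ (f₀ * s₀ + f₁ * t₀)) := by
  obtain ⟨x, hx, hB, hA⟩ := h
  obtain ⟨t, rfl⟩ := ZMod.intCast_surjective x
  refine ⟨1, t, by exact_mod_cast mt Nat.dvd_one.mp hp, ?_⟩
  simp only [← ZMod.intCast_zmod_eq_zero_iff_dvd, Int.cast_add, Int.cast_mul, Int.cast_pow,
    one_pow, mul_one]
  refine ⟨hx, fun hb => hB ⟨?_, ?_⟩, fun ha => hA ⟨?_, ?_, ?_⟩⟩
  · linear_combination hb.1
  · linear_combination hb.2
  · linear_combination ha.1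
  · linear_combination ha.2.1
  · linear_combination ha.2.2

/-- Let `a₀,a₁,d₀,d₁,f₀,f₁,b₀,b₁,b₂,e₀,e₁,e₂` be integers with
`gcd(a₀,a₁,d₀,d₁,f₀,f₁) = 1`, `gcd(b₀,b₁,b₂,e₀,e₁,e₂) = 1`, `gcd(a₀b₀,6) = 1`, and
`6` dividing each of `a₁,d₀,d₁,f₀,f₁,b₁,b₂,e₀,e₁,e₂`. Then for every prime `p` there
are integers `s₀, t₀` not divisible by `p` such that `p ∤ gcd(b(s₀,t₀), e(s₀,t₀))`
and `p ∤ gcd(a(s₀,t₀), d(s₀,t₀), f(s₀,t₀))`, where `a(s,t) = a₀s + a₁t`,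
`d(s,t) = d₀s + d₁t`, `f(s,t) = f₀s + f₁t`, `b(s,t) = b₀s² + b₁st + b₂t²`,
`e(s,t) = e₀s² + e₁st + e₂t²`. -/
theorem statement11 (a₀ a₁ d₀ d₁ f₀ f₁ b₀ b₁ b₂ e₀ e₁ e₂ : ℤ)
    (h1 : Nat.gcd (a₀.gcd a₁) (Nat.gcd (d₀.gcd d₁) (f₀.gcd f₁)) = 1)
    (h2 : Nat.gcd (b₀.gcd b₁) (Nat.gcd (b₂.gcd e₀) (e₁.gcd e₂)) = 1)
    (h3 : (a₀ * b₀).gcd 6 = 1)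
    (h4 : (6 : ℤ) ∣ a₁ ∧ (6 : ℤ) ∣ d₀ ∧ (6 : ℤ) ∣ d₁ ∧ (6 : ℤ) ∣ f₀ ∧ (6 : ℤ) ∣ f₁ ∧
      (6 : ℤ) ∣ b₁ ∧ (6 : ℤ) ∣ b₂ ∧ (6 : ℤ) ∣ e₀ ∧ (6 : ℤ) ∣ e₁ ∧ (6 : ℤ) ∣ e₂)
    (p : ℕ) (hp : p.Prime) :
    ∃ s₀ t₀ : ℤ, ¬ (p : ℤ) ∣ s₀ ∧ ¬ (p : ℤ) ∣ t₀ ∧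
      ¬ ((p : ℤ) ∣ (b₀ * s₀ ^ 2 + b₁ * s₀ * t₀ + b₂ * t₀ ^ 2) ∧
         (p : ℤ) ∣ (e₀ * s₀ ^ 2 + e₁ * s₀ * t₀ + e₂ * t₀ ^ 2)) ∧
      ¬ ((p : ℤ) ∣ (a₀ * s₀ + a₁ * t₀) ∧ (p : ℤ) ∣ (d₀ * s₀ + d₁ * t₀) ∧
         (p : ℤ) ∣ (f₀ * s₀ + f₁ * t₀)) := by
  have := Fact.mk hp
  apply exists_int_of_exists_zmod hp.one_lt.ne'
  by_cases hp6 : (p : ℤ) ∣ 6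
  · obtain ⟨ha₁, -, -, -, -, hb₁, hb₂, -⟩ := h4
    have h6 {x : ℤ} (hx : 6 ∣ x) : (x : ZMod p) = 0 :=
      (ZMod.intCast_zmod_eq_zero_iff_dvd _ _).mpr (hp6.trans hx)
    have hab := ZMod.intCast_ne_zero_of_gcd_eq_one hp.one_lt.ne' h3 hp6
    rw [Int.cast_mul, mul_ne_zero_iff] at hab
    exact ⟨1, one_ne_zero, by simp [h6 hb₁, h6 hb₂, hab.2], by simp [h6 ha₁, hab.1]⟩
  · have hp5 : 5 ≤ p := hp.five_le_of_ne_two_of_ne_three (by rintro rfl; norm_num at hp6)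
      (by rintro rfl; norm_num at hp6)
    exact exists_ne_zero_not_quadratics_zero_not_linears_zero
      (ZMod.not_intCast_eq_zero_of_gcd_eq_one hp.one_lt.ne' h2)
      (ZMod.not_intCast_eq_zero_of_gcd_eq_one hp.one_lt.ne' h1)
      (by rw [mk_fintype, ZMod.card]; exact_mod_cast hp5)
end
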